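/- arXiv:1801.01073 — 2 statements merged into one kernel-verified Lean document; each statement's English description precedes it below -/
import Mathlib

section
/- Given a reachability game G and its associated defender-choice LTS L(G): the relation {(s,s) : s a state of L(G)} ∪ {(s, s') : s ∈ V \ WinE} ∪ {(⟨s,X⟩, ⟨s,s̄⟩) : s ∈ V_∀ \ WinE, s̄ ∈ V \ WinE, s → s̄, X = succ(s)} is a bisimulation on L(G); hence if s ∉ WinE then s ∼ s'. -/
/-- A reachability game: states `V`, Eve's states, transition relation, target set. -/
structure RGame (V : Type) where
  eve : Set V
  trans : V → V → Prop
  target : Set V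

open Classical in
/-- The transfinite attractor stages: `W 0 = target`; for `o > 0`, a state not in
`W_{<o}` is added if it is Eve's with a transition into `W_{<o}`, or Adam's with a
nonempty successor set contained in `W_{<o}`. -/
noncomputable def RGame.W {V : Type} (g : RGame V) (o : Ordinal.{0}) : Set V :=
  if o = 0 then g.target
  else
    let Wlt : Set V := ⋃ o' : {x : Ordinal.{0} // x < o}, g.W o'.1
    {s | s ∉ Wlt ∧
      ((s ∈ g.eve ∧ ∃ t, g.trans s t ∧ t ∈ Wlt) ∨
       (s ∉ g.eve ∧ (∃ t, g.trans s t) ∧ ∀ t, g.trans s t → t ∈ Wlt))}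
termination_by o
decreasing_by exact o'.2

/-- Eve's winning region: the union of all attractor stages. -/
noncomputable def RGame.WinE {V : Type} (g : RGame V) : Set V := ⋃ o : Ordinal.{0}, g.W o
/-- A labelled transition system with states `S` and actions `A`. -/
structure LTS (S : Type) (A : Type) where
  tr : A → S → S → Prop

/-- `R` is a simulation: every transition from `s` is matched from `s'`. -/
def LTS.IsSimulation {S A : Type} (L : LTS S A) (R : S → S → Prop) : Prop :=
  ∀ s s', R s s' → ∀ a t, L.tr a s t → ∃ t', L.tr a s' t' ∧ R t t'

/-- `R` is a bisimulation: mutual transfer conditions. -/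
def LTS.IsBisimulation {S A : Type} (L : LTS S A) (R : S → S → Prop) : Prop :=
  ∀ s s', R s s' →
    (∀ a t, L.tr a s t → ∃ t', L.tr a s' t' ∧ R t t') ∧
    (∀ a t', L.tr a s' t' → ∃ t, L.tr a s t ∧ R t t')

/-- Simulation preorder: the union of all simulations. -/
def LTS.Sim {S A : Type} (L : LTS S A) (s s' : S) : Prop :=
  ∃ R, L.IsSimulation R ∧ R s s'

/-- Bisimilarity: the union of all bisimulations. -/
def LTS.Bisim {S A : Type} (L : LTS S A) (s s' : S) : Prop :=
  ∃ R, L.IsBisimulation R ∧ R s s'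
/-- States of the defender-choice LTS `L(G)`: original states, primed copies,
and the auxiliary states `⟨s,X⟩` (X = successor set of s) and `⟨s,t⟩`. -/
inductive DState (V : Type) where
  | base (s : V) : DState V
  | prime (s : V) : DState V
  | all (s : V) : DState V
  | pick (s t : V) : DState V

/-- Actions of `L(G)`: one action per game transition, the choice action, and `a_win`. -/
inductive DAct (V : Type) where
  | move (s t : V) : DAct V
  | choice : DAct V
  | win : DAct V

/-- Labelled transitions of the defender-choice LTS `L(G)`. -/
inductive DTrans {V : Type} (g : RGame V) : DAct V → DState V → DState V → Prop
  | eveBase {s t} (hs : s ∈ g.eve) (h : g.trans s t) :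
      DTrans g (DAct.move s t) (DState.base s) (DState.base t)
  | evePrime {s t} (hs : s ∈ g.eve) (h : g.trans s t) :
      DTrans g (DAct.move s t) (DState.prime s) (DState.prime t)
  | choiceAll {s} (hs : s ∉ g.eve) (h : ∃ t, g.trans s t) :
      DTrans g DAct.choice (DState.base s) (DState.all s)
  | choicePickB {s t} (hs : s ∉ g.eve) (h : g.trans s t) :
      DTrans g DAct.choice (DState.base s) (DState.pick s t)
  | choicePickP {s t} (hs : s ∉ g.eve) (h : g.trans s t) :
      DTrans g DAct.choice (DState.prime s) (DState.pick s t)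
  | allMove {s t} (hs : s ∉ g.eve) (h : g.trans s t) :
      DTrans g (DAct.move s t) (DState.all s) (DState.base t)
  | pickSame {s t} (hs : s ∉ g.eve) (h : g.trans s t) :
      DTrans g (DAct.move s t) (DState.pick s t) (DState.prime t)
  | pickOther {s t u} (hs : s ∉ g.eve) (ht : g.trans s t) (hu : g.trans s u) (hne : u ≠ t) :
      DTrans g (DAct.move s u) (DState.pick s t) (DState.base u)
  | winLoop {s} (h : s ∈ g.target) :
      DTrans g DAct.win (DState.base s) (DState.base s)

/-- The defender-choice LTS associated with a reachability game. -/
def DLTS {V : Type} (g : RGame V) : LTS (DState V) (DAct V) := ⟨fun a p q => DTrans g a p q⟩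


/-
At a state `s` outside Eve's attractor, Eve's moves lead outside the attractor, Adam (if he can
move at all) has a move outside it, and the `a_win` loop is absent. So when `s` plays the choice
`⟨s,X⟩`, the copy `s'` answers with `⟨s,s̄⟩` for a losing successor `s̄`; these two states have the
same moves except `a_{⟨s,s̄⟩}`, which leads to `s̄` resp. `s̄'`, again a pair of the relation.
All other transitions of `s` and `s'` are matched by the identical move of the other side.
-/

namespace RGame

variable {V : Type} {g : RGame V} {s t : V}

def attrBelow (g : RGame V) (o : Ordinal.{0}) : Set V :=
  ⋃ o' : {x : Ordinal.{0} // x < o}, g.W o'.1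

lemma mem_WinE_of_mem_W {o : Ordinal.{0}} (h : s ∈ g.W o) : s ∈ g.WinE :=
  Set.mem_iUnion.2 ⟨o, h⟩

lemma target_subset_WinE : g.target ⊆ g.WinE := fun s h =>
  mem_WinE_of_mem_W (o := 0) (by rw [RGame.W]; simpa using h)

lemma mem_WinE_of_attracted {o : Ordinal.{0}} (ho : o ≠ 0)
    (h : (s ∈ g.eve ∧ ∃ t, g.trans s t ∧ t ∈ g.attrBelow o) ∨
      (s ∉ g.eve ∧ (∃ t, g.trans s t) ∧ ∀ t, g.trans s t → t ∈ g.attrBelow o)) :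
    s ∈ g.WinE := by
  by_cases hs : s ∈ g.attrBelow o
  · obtain ⟨⟨o', _⟩, hs'⟩ := Set.mem_iUnion.1 hs
    exact mem_WinE_of_mem_W hs'
  · apply mem_WinE_of_mem_W (o := o)
    rw [RGame.W, if_neg ho]
    exact ⟨hs, h⟩

-- The supremum of the stages exists because `S` is indexed by a small type.
lemma exists_subset_attrBelow {S : Set V} (hS : S ⊆ g.WinE) :
    ∃ o : Ordinal.{0}, o ≠ 0 ∧ S ⊆ g.attrBelow o := by
  choose f hf using fun t : S => Set.mem_iUnion.1 (hS t.2)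
  refine ⟨Order.succ (⨆ t, f t), (zero_le.trans_lt (Order.lt_succ _)).ne', fun t ht => ?_⟩
  have hle : f ⟨t, ht⟩ ≤ ⨆ u, f u := le_ciSup Ordinal.bddAbove_of_small _
  exact Set.mem_iUnion.2 ⟨⟨f ⟨t, ht⟩, Order.lt_succ_of_le hle⟩, hf ⟨t, ht⟩⟩

lemma mem_WinE_of_eve_of_trans (hs : s ∈ g.eve) (hst : g.trans s t) (ht : t ∈ g.WinE) :
    s ∈ g.WinE := by
  obtain ⟨o, ho, hto⟩ := exists_subset_attrBelow (Set.singleton_subset_iff.2 ht)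
  exact mem_WinE_of_attracted ho (Or.inl ⟨hs, t, hst, hto rfl⟩)

lemma mem_WinE_of_adam (hs : s ∉ g.eve) (hex : ∃ t, g.trans s t)
    (hall : ∀ t, g.trans s t → t ∈ g.WinE) : s ∈ g.WinE := by
  obtain ⟨o, ho, hsucc⟩ := exists_subset_attrBelow (S := {t | g.trans s t}) hall
  exact mem_WinE_of_attracted ho (Or.inr ⟨hs, hex, fun t ht => hsucc ht⟩)

lemma exists_trans_notMem_WinE (hs : s ∉ g.eve) (hsW : s ∉ g.WinE) (hex : ∃ t, g.trans s t) :
    ∃ t, g.trans s t ∧ t ∉ g.WinE := by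
  by_contra! h
  exact hsW (mem_WinE_of_adam hs hex h)

end RGame

section DefenderChoice

variable {V : Type} {g : RGame V} {s t : V}

def losingRel (g : RGame V) (p q : DState V) : Prop :=
  p = q ∨
  (∃ s : V, s ∉ g.WinE ∧ p = DState.base s ∧ q = DState.prime s) ∨
  (∃ s t : V, s ∉ g.eve ∧ s ∉ g.WinE ∧ t ∉ g.WinE ∧ g.trans s t ∧
    p = DState.all s ∧ q = DState.pick s t)

lemma losingRel_base_prime (hs : s ∉ g.WinE) :
    losingRel g (DState.base s) (DState.prime s) :=
  Or.inr (Or.inl ⟨s, hs, rfl, rfl⟩)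

lemma losingRel_all_pick (hs : s ∉ g.eve) (hsW : s ∉ g.WinE) (htW : t ∉ g.WinE)
    (hst : g.trans s t) : losingRel g (DState.all s) (DState.pick s t) :=
  Or.inr (Or.inr ⟨s, t, hs, hsW, htW, hst, rfl, rfl⟩)

lemma forth_base_prime (hsW : s ∉ g.WinE) {a : DAct V} {p : DState V}
    (h : DTrans g a (DState.base s) p) :
    ∃ q, DTrans g a (DState.prime s) q ∧ losingRel g p q := by
  cases h with
  | eveBase hs hst =>
    exact ⟨_, .evePrime hs hst,
      losingRel_base_prime fun htW => hsW (g.mem_WinE_of_eve_of_trans hs hst htW)⟩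
  | choiceAll hs hex =>
    obtain ⟨t, hst, htW⟩ := g.exists_trans_notMem_WinE hs hsW hex
    exact ⟨_, .choicePickP hs hst, losingRel_all_pick hs hsW htW hst⟩
  | choicePickB hs hst => exact ⟨_, .choicePickP hs hst, Or.inl rfl⟩
  | winLoop hs => exact absurd (g.target_subset_WinE hs) hsW

lemma back_base_prime (hsW : s ∉ g.WinE) {a : DAct V} {q : DState V}
    (h : DTrans g a (DState.prime s) q) :
    ∃ p, DTrans g a (DState.base s) p ∧ losingRel g p q := by
  cases h with
  | evePrime hs hst =>
    exact ⟨_, .eveBase hs hst,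
      losingRel_base_prime fun htW => hsW (g.mem_WinE_of_eve_of_trans hs hst htW)⟩
  | choicePickP hs hst => exact ⟨_, .choicePickB hs hst, Or.inl rfl⟩

lemma forth_all_pick (hs : s ∉ g.eve) (htW : t ∉ g.WinE) (hst : g.trans s t)
    {a : DAct V} {p : DState V} (h : DTrans g a (DState.all s) p) :
    ∃ q, DTrans g a (DState.pick s t) q ∧ losingRel g p q := by
  cases h with
  | @allMove _ u _ hsu =>
    by_cases hut : u = t
    · subst hut
      exact ⟨_, .pickSame hs hst, losingRel_base_prime htW⟩
    · exact ⟨_, .pickOther hs hst hsu hut, Or.inl rfl⟩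

lemma back_all_pick (hs : s ∉ g.eve) (htW : t ∉ g.WinE) (hst : g.trans s t)
    {a : DAct V} {q : DState V} (h : DTrans g a (DState.pick s t) q) :
    ∃ p, DTrans g a (DState.all s) p ∧ losingRel g p q := by
  cases h with
  | pickSame => exact ⟨_, .allMove hs hst, losingRel_base_prime htW⟩
  | pickOther _ _ hsu => exact ⟨_, .allMove hs hsu, Or.inl rfl⟩

theorem isBisimulation_losingRel : (DLTS g).IsBisimulation (losingRel g) := by
  rintro p q (rfl | ⟨s, hsW, rfl, rfl⟩ | ⟨s, t, hs, -, htW, hst, rfl, rfl⟩)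
  · exact ⟨fun a t h => ⟨t, h, Or.inl rfl⟩, fun a t h => ⟨t, h, Or.inl rfl⟩⟩
  · exact ⟨fun _ _ => forth_base_prime hsW, fun _ _ => back_base_prime hsW⟩
  · exact ⟨fun _ _ => forth_all_pick hs htW hst, fun _ _ => back_all_pick hs htW hst⟩

end DefenderChoice

/-- the relation consisting of the identity, the pairs
`(s, s')` for `s ∉ WinE`, and the pairs `(⟨s,X⟩, ⟨s,s̄⟩)` for Adam's
`s ∉ WinE` with `s → s̄` and `s̄ ∉ WinE`, is a bisimulation on `L(G)`;
hence `s ∉ WinE` implies `s ∼ s'`. -/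
theorem losing_bisimilar {V : Type} (g : RGame V) :
    (DLTS g).IsBisimulation (fun p q =>
      p = q ∨
      (∃ s : V, s ∉ g.WinE ∧ p = DState.base s ∧ q = DState.prime s) ∨
      (∃ s t : V, s ∉ g.eve ∧ s ∉ g.WinE ∧ t ∉ g.WinE ∧ g.trans s t ∧
        p = DState.all s ∧ q = DState.pick s t)) ∧
    ∀ s : V, s ∉ g.WinE → (DLTS g).Bisim (DState.base s) (DState.prime s) :=
  ⟨isBisimulation_losingRel, fun _ hs => ⟨_, isBisimulation_losingRel, losingRel_base_prime hs⟩⟩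
end

section
/- Combining the two directions of the defender-choice reduction: for every state s of a (finitely branching) reachability game G and every relation ρ on the states of L(G) with ∼ ⊆ ρ ⊆ ⊑, we have s ∈ WinE iff (s, s') ∉ ρ. -/
namespace RGame

/-- The union of earlier attractor stages. -/
noncomputable def Wlt {V : Type} (g : RGame V) (o : Ordinal.{0}) : Set V :=
  ⋃ o' : {x : Ordinal.{0} // x < o}, g.W o'.1

lemma W_zero {V : Type} (g : RGame V) : g.W 0 = g.target := by
  rw [RGame.W]; simp

lemma W_pos {V : Type} (g : RGame V) {o : Ordinal.{0}} (h : o ≠ 0) :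
    g.W o = {s | s ∉ g.Wlt o ∧
      ((s ∈ g.eve ∧ ∃ t, g.trans s t ∧ t ∈ g.Wlt o) ∨
       (s ∉ g.eve ∧ (∃ t, g.trans s t) ∧ ∀ t, g.trans s t → t ∈ g.Wlt o))} := by
  rw [RGame.W, if_neg h]; rfl

lemma mem_WinE_iff {V : Type} (g : RGame V) {s : V} :
    s ∈ g.WinE ↔ ∃ o : Ordinal.{0}, s ∈ g.W o := Set.mem_iUnion

lemma mem_Wlt_iff {V : Type} (g : RGame V) {s : V} {o : Ordinal.{0}} :
    s ∈ g.Wlt o ↔ ∃ o' : Ordinal.{0}, o' < o ∧ s ∈ g.W o' := by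
  constructor
  · intro h
    obtain ⟨⟨o', ho'⟩, hm⟩ := Set.mem_iUnion.mp h
    exact ⟨o', ho', hm⟩
  · rintro ⟨o', ho', hm⟩
    exact Set.mem_iUnion.mpr ⟨⟨o', ho'⟩, hm⟩

lemma Wlt_subset_WinE {V : Type} (g : RGame V) (o : Ordinal.{0}) :
    g.Wlt o ⊆ g.WinE := by
  intro s hs
  obtain ⟨o', _, h⟩ := (g.mem_Wlt_iff).mp hs
  exact (g.mem_WinE_iff).mpr ⟨o', h⟩

lemma target_subset_WinE_s18 {V : Type} (g : RGame V) : g.target ⊆ g.WinE := by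
  intro s hs
  exact (g.mem_WinE_iff).mpr ⟨0, by rwa [g.W_zero]⟩

lemma eve_close {V : Type} (g : RGame V) {s t : V} (hs : s ∈ g.eve)
    (ht : g.trans s t) (hw : t ∈ g.WinE) : s ∈ g.WinE := by
  obtain ⟨o, hto⟩ := (g.mem_WinE_iff).mp hw
  by_cases hmem : s ∈ g.Wlt (o + 1)
  · exact g.Wlt_subset_WinE _ hmem
  · refine (g.mem_WinE_iff).mpr ⟨o + 1, ?_⟩
    rw [g.W_pos (by simpa using (Ordinal.succ_ne_zero o))]
    refine ⟨hmem, Or.inl ⟨hs, t, ht, ?_⟩⟩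
    exact (g.mem_Wlt_iff).mpr ⟨o, by rw [Ordinal.add_one_eq_succ]; exact Order.lt_succ o, hto⟩

open Classical in
lemma adam_close {V : Type} (g : RGame V) {s : V} (hs : s ∉ g.eve)
    (hfin : {t | g.trans s t}.Finite)
    (hex : ∃ t, g.trans s t) (hall : ∀ t, g.trans s t → t ∈ g.WinE) :
    s ∈ g.WinE := by
  classical
  set F : V → Ordinal.{0} := fun t =>
    if h : t ∈ g.WinE then ((g.mem_WinE_iff).mp h).choose else 0 with hF
  have hFspec : ∀ t, t ∈ g.WinE → t ∈ g.W (F t) := by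
    intro t h
    simp only [hF, dif_pos h]
    exact ((g.mem_WinE_iff).mp h).choose_spec
  set o : Ordinal.{0} := hfin.toFinset.sup F with ho
  have hlt : ∀ t, g.trans s t → t ∈ g.Wlt (o + 1) := by
    intro t ht
    refine (g.mem_Wlt_iff).mpr ⟨F t, ?_, hFspec t (hall t ht)⟩
    have hle : F t ≤ o := Finset.le_sup (by simpa using ht)
    rw [Ordinal.add_one_eq_succ]
    exact Order.lt_succ_of_le hle
  by_cases hmem : s ∈ g.Wlt (o + 1)
  · exact g.Wlt_subset_WinE _ hmem
  · refine (g.mem_WinE_iff).mpr ⟨o + 1, ?_⟩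
    rw [g.W_pos (by simpa using (Ordinal.succ_ne_zero o))]
    exact ⟨hmem, Or.inr ⟨hs, hex, hlt⟩⟩

end RGame

/-- If `s ∈ W o` then `base s` is not simulated by `prime s`. -/
lemma not_sim_of_W {V : Type} (g : RGame V) :
    ∀ o : Ordinal.{0}, ∀ s : V, s ∈ g.W o →
      ¬ (DLTS g).Sim (DState.base s) (DState.prime s) := by
  intro o
  induction o using Ordinal.induction with
  | h o IH =>
    intro s hs hsim
    obtain ⟨R, hR, hRs⟩ := hsim
    by_cases h0 : o = 0
    · -- `s` is a target state: the `win` loop cannot be matched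
      subst h0
      rw [g.W_zero] at hs
      obtain ⟨t', ht', -⟩ :=
        hR _ _ hRs (DAct.win) (DState.base s) (DTrans.winLoop hs)
      cases ht'
    · rw [g.W_pos h0] at hs
      obtain ⟨-, hcase⟩ := hs
      rcases hcase with ⟨hev, t, htr, htW⟩ | ⟨hev, hex, hall⟩
      · -- Eve's move into an earlier stage
        obtain ⟨t', ht', hRt⟩ :=
          hR _ _ hRs (DAct.move s t) (DState.base t) (DTrans.eveBase hev htr)
        cases ht' with
        | evePrime _ _ =>
          obtain ⟨o', ho', hW⟩ := (g.mem_Wlt_iff).mp htW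
          exact IH o' ho' t hW ⟨R, hR, hRt⟩
      · -- Adam's state: play the choice action
        obtain ⟨q, hq, hRq⟩ :=
          hR _ _ hRs DAct.choice (DState.all s) (DTrans.choiceAll hev hex)
        cases hq with
        | choicePickP hsa htq =>
          rename_i t
          obtain ⟨t', ht', hRt⟩ :=
            hR _ _ hRq (DAct.move s t) (DState.base t) (DTrans.allMove hev htq)
          cases ht' with
          | pickSame _ _ =>
            obtain ⟨o', ho', hW⟩ := (g.mem_Wlt_iff).mp (hall t htq)
            exact IH o' ho' t hW ⟨R, hR, hRt⟩
          | pickOther _ _ _ hne => exact absurd rfl hne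

/-- The candidate bisimulation used when `s ∉ WinE`. -/
def BRel {V : Type} (g : RGame V) : DState V → DState V → Prop := fun p q =>
  p = q ∨
  (∃ s, s ∉ g.WinE ∧ p = DState.base s ∧ q = DState.prime s) ∨
  (∃ s t, s ∉ g.eve ∧ s ∉ g.WinE ∧ g.trans s t ∧ t ∉ g.WinE ∧
    p = DState.all s ∧ q = DState.pick s t)

lemma BRel_isBisim {V : Type} (g : RGame V)
    (hfin : ∀ s : V, {t | g.trans s t}.Finite) :
    (DLTS g).IsBisimulation (BRel g) := by
  classical
  intro p q hpq
  rcases hpq with rfl | ⟨s, hw, rfl, rfl⟩ | ⟨s, tb, hev, hw, htb, htbw, rfl, rfl⟩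
  · exact ⟨fun a t ht => ⟨t, ht, Or.inl rfl⟩, fun a t ht => ⟨t, ht, Or.inl rfl⟩⟩
  · constructor
    · -- transitions of `base s`
      intro a t ht
      cases ht with
      | eveBase hev htr =>
        rename_i u
        have hu : u ∉ g.WinE := fun h => hw (g.eve_close hev htr h)
        exact ⟨DState.prime u, DTrans.evePrime hev htr,
          Or.inr (Or.inl ⟨u, hu, rfl, rfl⟩)⟩
      | choiceAll hev hex =>
        have : ∃ u, g.trans s u ∧ u ∉ g.WinE := by
          by_contra hcon
          push_neg at hcon
          exact hw (g.adam_close hev (hfin s) hex hcon)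
        obtain ⟨u, hu, huw⟩ := this
        exact ⟨DState.pick s u, DTrans.choicePickP hev hu,
          Or.inr (Or.inr ⟨s, u, hev, hw, hu, huw, rfl, rfl⟩)⟩
      | choicePickB hev htr =>
        rename_i u
        exact ⟨DState.pick s u, DTrans.choicePickP hev htr, Or.inl rfl⟩
      | winLoop hT => exact absurd (g.target_subset_WinE_s18 hT) hw
    · -- transitions of `prime s`
      intro a t ht
      cases ht with
      | evePrime hev htr =>
        rename_i u
        have hu : u ∉ g.WinE := fun h => hw (g.eve_close hev htr h)
        exact ⟨DState.base u, DTrans.eveBase hev htr,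
          Or.inr (Or.inl ⟨u, hu, rfl, rfl⟩)⟩
      | choicePickP hev htr =>
        rename_i u
        exact ⟨DState.pick s u, DTrans.choicePickB hev htr, Or.inl rfl⟩
  · constructor
    · -- transitions of `all s`
      intro a t ht
      cases ht with
      | allMove hev htr =>
        rename_i u
        by_cases hut : u = tb
        · subst hut
          exact ⟨DState.prime u, DTrans.pickSame hev htr,
            Or.inr (Or.inl ⟨u, htbw, rfl, rfl⟩)⟩
        · exact ⟨DState.base u, DTrans.pickOther hev htb htr hut, Or.inl rfl⟩
    · -- transitions of `pick s tb`
      intro a t ht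
      cases ht with
      | pickSame hev htr =>
        exact ⟨DState.base tb, DTrans.allMove hev htr,
          Or.inr (Or.inl ⟨tb, htbw, rfl, rfl⟩)⟩
      | pickOther hev ht2 hu hne =>
        rename_i u
        exact ⟨DState.base u, DTrans.allMove hev hu, Or.inl rfl⟩

/-- for a finitely branching reachability game `G` and any
relation `ρ` with `∼ ⊆ ρ ⊆ ⊑` on `L(G)`, a state `s` is in Eve's winning
region iff `(s, s') ∉ ρ`. -/
theorem winning_iff_not_rho {V : Type} (g : RGame V)
    (hfin : ∀ s : V, {t | g.trans s t}.Finite)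
    (ρ : DState V → DState V → Prop)
    (hb : ∀ p q, (DLTS g).Bisim p q → ρ p q)
    (hsim : ∀ p q, ρ p q → (DLTS g).Sim p q) (s : V) :
    s ∈ g.WinE ↔ ¬ ρ (DState.base s) (DState.prime s) := by
  constructor
  · intro hw hrho
    obtain ⟨o, hW⟩ := (g.mem_WinE_iff).mp hw
    exact not_sim_of_W g o s hW (hsim _ _ hrho)
  · intro hrho
    by_contra hw
    exact hrho (hb _ _ ⟨BRel g, BRel_isBisim g hfin,
      Or.inr (Or.inl ⟨s, hw, rfl, rfl⟩)⟩)
end
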